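/- For all x > 0, the digamma function satisfies (log Γ(x))' < log x - 1/(2x). -/

import Mathlib

/-!
Put `g y = log y - 1 / (2 y) - ψ y`. The recurrence `ψ (y + 1) = ψ y + 1 / y` makes
`g y - g (y + 1)` the error of the trapezoid rule for `∫_y^{y+1} dt / t`, which is positive.
Convexity of `log ∘ Γ` bounds `ψ y` by the slope `log Γ (y + 1) - log Γ y = log y`, so
`g y ≥ -1 / (2 y)`. Hence `g` decreases strictly along `x, x + 1, x + 2, …` towards a limit `≥ 0`,
and `g x > 0`.
-/

open Real Filter Topology Set

local notation "ψ" => deriv fun y => Real.log (Real.Gamma y)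

lemma log_add_one_sub_log_lt {a : ℝ} (ha : 0 < a) :
    log (a + 1) - log a < (a⁻¹ + (a + 1)⁻¹) / 2 := by
  obtain ⟨z, hz⟩ : ∃ z : ℝ, z = 1 / (2 * a + 1) := ⟨_, rfl⟩
  have hz0 : 0 < z := by rw [hz]; positivity
  have hz1 : z < 1 := by rw [hz, div_lt_one (by positivity)]; linarith
  -- Compare `log (1 + a⁻¹) = ∑ 2 z^(2k+1) / (2k+1)` termwise with `∑ 2 z^(2k+1)`.
  have hlog : HasSum (fun k : ℕ => 2 * (1 / (2 * k + 1)) * z ^ (2 * k + 1))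
      (log (a + 1) - log a) := by
    rw [← log_div (by positivity) ha.ne', hz, show (a + 1) / a = 1 + a⁻¹ by field_simp]
    exact hasSum_log_one_add_inv ha
  have hgeom : HasSum (fun k : ℕ => 2 * z ^ (2 * k + 1)) ((a⁻¹ + (a + 1)⁻¹) / 2) := by
    have h1 : 1 - z ^ 2 = 4 * a * (a + 1) / (2 * a + 1) ^ 2 := by
      rw [hz]; field_simp; ring
    have hsum : 2 * z * (1 - z ^ 2)⁻¹ = (a⁻¹ + (a + 1)⁻¹) / 2 := by
      rw [h1, hz]; field_simp; ring
    have hterm : (fun k : ℕ => 2 * z ^ (2 * k + 1)) = fun k => 2 * z * (z ^ 2) ^ k := by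
      ext k
      ring
    rw [hterm, ← hsum]
    exact (hasSum_geometric_of_lt_one (sq_nonneg z) (by nlinarith)).mul_left (2 * z)
  refine hasSum_lt (i := 1) (fun k => ?_) ?_ hlog hgeom
  · have hk : 1 / (2 * (k : ℝ) + 1) ≤ 1 := by
      rw [div_le_one (by positivity)]
      linarith [k.cast_nonneg (α := ℝ)]
    have := pow_pos hz0 (2 * k + 1)
    nlinarith
  · have := pow_pos hz0 3
    norm_num
    linarith

lemma log_Gamma_add_one {y : ℝ} (hy : y ≠ 0) (hΓ : Gamma y ≠ 0) :
    log (Gamma (y + 1)) = log (Gamma y) + log y := by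
  rw [Gamma_add_one hy, log_mul hy hΓ, add_comm]

lemma differentiableAt_log_Gamma {y : ℝ} (hy : ∀ m : ℕ, y ≠ -m) :
    DifferentiableAt ℝ (fun y => log (Gamma y)) y :=
  (differentiableAt_Gamma hy).log (Gamma_ne_zero hy)

lemma digamma_add_one {y : ℝ} (hy : ∀ m : ℕ, y ≠ -m) : ψ (y + 1) = ψ y + y⁻¹ := by
  have hy0 : y ≠ 0 := by simpa using hy 0
  have hrec : (fun z => log (Gamma (z + 1))) =ᶠ[𝓝 y] fun z => log (Gamma z) + log z := by
    filter_upwards [isOpen_ne.mem_nhds hy0,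
      (differentiableAt_Gamma hy).continuousAt.eventually_ne (Gamma_ne_zero hy)] with z hz hΓ
    exact log_Gamma_add_one hz hΓ
  rw [← deriv_comp_add_const, hrec.deriv_eq]
  exact ((differentiableAt_log_Gamma hy).hasDerivAt.add (hasDerivAt_log hy0)).deriv

lemma forall_ne_neg_natCast_of_pos {y : ℝ} (hy : 0 < y) : ∀ m : ℕ, y ≠ -m :=
  fun m => (neg_nonpos.2 m.cast_nonneg).trans_lt hy |>.ne'

lemma digamma_le_log {y : ℝ} (hy : 0 < y) : ψ y ≤ log y := by
  have hslope := convexOn_log_Gamma.deriv_le_slope (mem_Ioi.2 hy)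
    (mem_Ioi.2 (by positivity : 0 < y + 1)) (lt_add_one y)
    (differentiableAt_log_Gamma (forall_ne_neg_natCast_of_pos hy))
  rwa [slope_def_field, Function.comp_apply, Function.comp_apply,
    log_Gamma_add_one hy.ne' (Gamma_pos_of_pos hy).ne', add_sub_cancel_left, add_sub_cancel_left,
    div_one] at hslope

noncomputable def digammaGap (y : ℝ) : ℝ := log y - 1 / (2 * y) - ψ y

lemma digammaGap_add_one_lt {y : ℝ} (hy : 0 < y) : digammaGap (y + 1) < digammaGap y := by
  have htrap := log_add_one_sub_log_lt hy
  have hinv : y⁻¹ + 1 / (2 * (y + 1)) - 1 / (2 * y) = (y⁻¹ + (y + 1)⁻¹) / 2 := by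
    field_simp
    ring
  rw [digammaGap, digammaGap, digamma_add_one (forall_ne_neg_natCast_of_pos hy)]
  linarith

lemma neg_one_div_two_mul_le_digammaGap {y : ℝ} (hy : 0 < y) : -(1 / (2 * y)) ≤ digammaGap y := by
  rw [digammaGap]
  linarith [digamma_le_log hy]

lemma digammaGap_add_nat_le {y : ℝ} (hy : 0 < y) (n : ℕ) : digammaGap (y + n) ≤ digammaGap y := by
  induction n with
  | zero => simp
  | succ n ih =>
    rw [Nat.cast_succ, ← add_assoc]
    exact (digammaGap_add_one_lt (by positivity)).le.trans ih

lemma digammaGap_nonneg {y : ℝ} (hy : 0 < y) : 0 ≤ digammaGap y := by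
  have hlim : Tendsto (fun n : ℕ => -(1 / (2 * (y + n)))) atTop (𝓝 0) := by
    have h : Tendsto (fun n : ℕ => 2 * (y + n)) atTop atTop :=
      (tendsto_atTop_add_const_left _ y tendsto_natCast_atTop_atTop).const_mul_atTop two_pos
    simpa only [one_div, neg_zero, Pi.inv_apply] using h.inv_tendsto_atTop.neg
  exact le_of_tendsto' hlim fun n =>
    (neg_one_div_two_mul_le_digammaGap (by positivity)).trans (digammaGap_add_nat_le hy n)

theorem digamma_upper (x : ℝ) (hx : 0 < x) :
    deriv (fun y => Real.log (Real.Gamma y)) x < Real.log x - 1 / (2 * x) := by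
  have hgap : 0 < digammaGap x :=
    (digammaGap_nonneg (by positivity)).trans_lt (digammaGap_add_one_lt hx)
  rwa [digammaGap, sub_pos] at hgap
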